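/- There exist structures A ⊆ B in the vocabulary of a single equivalence relation such that A ⪯_{ω₁} B holds but A ≤_{ω₁} B fails: namely, A consists of ω₁ equivalence classes each of size ω₁, and B adds one further equivalence class of size ω₁. Player ∃ wins the game G_⪯(A,B), but Player ∀ wins G_≤(A,B) (in fact in two moves). -/

import Mathlib

/-!
`A` and `B` are in fact isomorphic, and for every countable `C ⊆ A` there is an isomorphism
that is the identity on `C`: a bijection between the `ω₁` classes of `A` and the `ω₁ + 1`
classes of `B` can fix the countably many classes met by `C`. In `G_⪯`, ∃ answers every move
by such an isomorphism and its inverse.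

In `G_≤`, ∀ first demands a point of the new class of `B` in the range; ∃ must map some `a` to
it. Since positions are countable and classes uncountable, ∀ can next demand that a fresh
element of the class of `a` be mapped to itself. A partial isomorphism cannot send one class of
`A` both into the new class and into itself.
-/

open Cardinal

noncomputable section

/-- ω₁ as an ordinal: the games below have this length. -/
abbrev om1 : Ordinal.{0} := (Cardinal.aleph 1).ord

/-- The countable ordinals, a set of cardinality ω₁. -/
abbrev O1 : Type 1 := {o : Ordinal // o < om1}

/-- The model `A`: `ω₁` equivalence classes (first coordinate), each of size `ω₁`. -/
abbrev ModA : Type 1 := O1 × O1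

/-- The model `B ⊇ A`: one additional equivalence class, indexed by `none`. -/
abbrev ModB : Type 1 := Option O1 × O1

/-- The equivalence relation on `A`. -/
def EqA (x y : ModA) : Prop := x.1 = y.1

/-- The equivalence relation on `B`. -/
def EqB (x y : ModB) : Prop := x.1 = y.1

/-- The inclusion `A ⊆ B`. -/
def incl (x : ModA) : ModB := (some x.1, x.2)

/-- Domain of a set of ordered pairs. -/
def pdom {X Y : Type*} (p : Set (X × Y)) : Set X := {x | ∃ y, (x, y) ∈ p}

/-- Range of a set of ordered pairs. -/
def pran {X Y : Type*} (p : Set (X × Y)) : Set Y := {y | ∃ x, (x, y) ∈ p}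

/-- Partial isomorphism between the structures `(A, EqA)` and `(B, EqB)`. -/
def IsPIso (p : Set (ModA × ModB)) : Prop :=
  (∀ a b b', (a, b) ∈ p → (a, b') ∈ p → b = b') ∧
  (∀ a a' b, (a, b) ∈ p → (a', b) ∈ p → a = a') ∧
  (∀ a b a' b', (a, b) ∈ p → (a', b') ∈ p → (EqA a a' ↔ EqB b b'))

/-- Union of the positions of rounds `< α`. -/
def priorPos (g : Ordinal.{0} → Set (ModA × ModB)) (α : Ordinal.{0}) :
    Set (ModA × ModB) :=
  {q | ∃ β < α, q ∈ g β}

/-- Legality of a ∀-move in `G_≤(A,B)`: an identity demand `Sum.inl a` is legal only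
when `a` is in neither the domain nor the range of the position built so far. -/
def legalLe (pr : Set (ModA × ModB)) : ModA ⊕ (ModA ⊕ ModB) → Prop
  | Sum.inl a => a ∉ pdom pr ∧ incl a ∉ pran pr
  | Sum.inr _ => True

/-- The demand a ∀-move in `G_≤(A,B)` places on ∃'s next position. -/
def demandLe (mv : ModA ⊕ (ModA ⊕ ModB)) (p : Set (ModA × ModB)) : Prop :=
  match mv with
  | Sum.inl a => (a, incl a) ∈ p
  | Sum.inr (Sum.inl a) => a ∈ pdom p
  | Sum.inr (Sum.inr b) => b ∈ pran p

/-- The demand a ∀-move places in the Ehrenfeucht–Fraïssé game `G_⪯(A,B)`. -/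
def demandPrec (mv : ModA ⊕ ModB) (p : Set (ModA × ModB)) : Prop :=
  match mv with
  | Sum.inl a => a ∈ pdom p
  | Sum.inr b => b ∈ pran p

/-- Player ∃ has a winning strategy in `G_⪯(A,B)` of length ω₁: ∀ first fixes a
countable `C ⊆ A` mapped identically from the start, then the EF game of length ω₁ is
played, ∃ maintaining a countable partial isomorphism; ∃'s strategy may use only the
moves made so far. -/
def existsWinsPrec : Prop :=
  ∃ S : Set ModA → (Ordinal.{0} → ModA ⊕ ModB) → Ordinal.{0} → Set (ModA × ModB),
    (∀ C m m' α, (∀ β ≤ α, m β = m' β) → S C m α = S C m' α) ∧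
    ∀ C : Set ModA, C.Countable → ∀ (m : Ordinal.{0} → ModA ⊕ ModB),
      ∀ α < om1,
        IsPIso (S C m α) ∧ (S C m α).Countable ∧
        (∀ a ∈ C, (a, incl a) ∈ S C m α) ∧
        (∀ β < α, S C m β ⊆ S C m α) ∧ demandPrec (m α) (S C m α)

/-- Player ∀ has a winning strategy in `G_≤(A,B)` of length ω₁: a strategy producing,
from the positions played by ∃ at earlier rounds, a move at each round, such that along
every play there is a round `α < ω₁` at which all of ∀'s moves so far were legal but
∃'s position fails to be a good response (a countable partial isomorphism extending the
earlier positions and fulfilling the demand). -/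
def forallWinsLe : Prop :=
  ∃ SA : (Ordinal.{0} → Set (ModA × ModB)) → Ordinal.{0} → (ModA ⊕ (ModA ⊕ ModB)),
    (∀ p p' α, (∀ β < α, p β = p' β) → SA p α = SA p' α) ∧
    ∀ p : Ordinal.{0} → Set (ModA × ModB), ∃ α < om1,
      (∀ β ≤ α, legalLe (priorPos p β) (SA p β)) ∧
      ¬(IsPIso (p α) ∧ (p α).Countable ∧ (∀ β < α, p β ⊆ p α) ∧
          demandLe (SA p α) (p α))

lemma Set.Infinite.exists_equiv_option_fixing {α : Type*} {D : Set α} (hD : Dᶜ.Infinite) :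
    ∃ e : α ≃ Option α, ∀ i ∈ D, e i = some i := by
  classical
  have hcompl : (some '' D)ᶜ = insert none (some '' Dᶜ) := by
    ext (_ | x) <;> simp
  have hcard : #(Dᶜ : Set α) = #((some '' D)ᶜ : Set (Option α)) := by
    rw [hcompl, mk_insert (by simp), mk_image_eq (Option.some_injective _),
      add_one_eq (infinite_iff.1 hD.to_subtype)]
  obtain ⟨f⟩ := Cardinal.eq.1 hcard
  refine ⟨(Equiv.Set.sumCompl D).symm.trans ((Equiv.sumCongr
    (Equiv.Set.image some D (Option.some_injective _)) f).trans (Equiv.Set.sumCompl _)),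
    fun i hi => ?_⟩
  simp [Equiv.Set.sumCompl_symm_apply_of_mem hi, Equiv.Set.image, Equiv.Set.imageOfInjOn]

lemma one_lt_om1 : (1 : Ordinal) < om1 :=
  lt_ord.2 (by simp)

lemma countable_Iic_of_lt_om1 {α : Ordinal.{0}} (hα : α < om1) : (Set.Iic α).Countable := by
  rw [← Set.Iio_insert]
  refine Set.Countable.insert α (le_aleph0_iff_set_countable.1 ?_)
  rw [mk_Iio_ordinal, lift_le_aleph0, ← lt_aleph_one_iff]
  exact lt_ord.1 hα

instance : Uncountable O1 := by
  rw [← aleph0_lt_mk_iff]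
  change ℵ₀ < #(Set.Iio om1)
  simp [mk_Iio_ordinal]

lemma Set.Countable.infinite_compl {α : Type*} [Uncountable α] {s : Set α} (hs : s.Countable) :
    sᶜ.Infinite := fun h => not_countable_univ (by simpa using hs.union h.countable)

def IsIso (e : ModA ≃ ModB) : Prop := ∀ a a', EqA a a' ↔ EqB (e a) (e a')

lemma exists_isIso_fixing {C : Set ModA} (hC : C.Countable) :
    ∃ e : ModA ≃ ModB, IsIso e ∧ ∀ a ∈ C, e a = incl a := by
  obtain ⟨G, hG⟩ := (hC.image Prod.fst).infinite_compl.exists_equiv_option_fixing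
  exact ⟨G.prodCongr (Equiv.refl O1), fun a a' => G.injective.eq_iff.symm,
    fun a ha => Prod.ext (hG a.1 ⟨a, ha, rfl⟩) rfl⟩

def graphOn (e : ModA → ModB) (X : Set ModA) : Set (ModA × ModB) := (fun a => (a, e a)) '' X

lemma mem_graphOn {e : ModA → ModB} {X : Set ModA} {a : ModA} {b : ModB} :
    (a, b) ∈ graphOn e X ↔ a ∈ X ∧ e a = b := by
  constructor
  · rintro ⟨x, hx, h⟩
    cases h
    exact ⟨hx, rfl⟩
  · rintro ⟨hx, rfl⟩
    exact ⟨a, hx, rfl⟩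

lemma isPIso_graphOn {e : ModA ≃ ModB} (he : IsIso e) (X : Set ModA) :
    IsPIso (graphOn e X) := by
  simp only [IsPIso, mem_graphOn]
  refine ⟨?_, ?_, ?_⟩
  · rintro a _ _ ⟨-, rfl⟩ ⟨-, rfl⟩
    rfl
  · rintro a a' _ ⟨-, rfl⟩ ⟨-, h⟩
    exact (e.injective h).symm
  · rintro a _ a' _ ⟨-, rfl⟩ ⟨-, rfl⟩
    exact he a a'

lemma existsWinsPrec_of_isIso (e : Set ModA → ModA ≃ ModB) (he : ∀ C, IsIso (e C))
    (hfix : ∀ C : Set ModA, C.Countable → ∀ a ∈ C, e C a = incl a) : existsWinsPrec := by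
  let pull (C : Set ModA) : ModA ⊕ ModB → ModA := Sum.elim id (e C).symm
  refine ⟨fun C m α => graphOn (e C) (C ∪ (pull C ∘ m) '' Set.Iic α), ?_, ?_⟩
  · intro C m m' α hm
    exact congrArg (fun s => graphOn (e C) (C ∪ s))
      (Set.image_congr fun β hβ => congrArg (pull C) (hm β hβ))
  intro C hC m α hα
  refine ⟨isPIso_graphOn (he C) _, ?_, ?_, ?_, ?_⟩
  · exact (hC.union ((countable_Iic_of_lt_om1 hα).image _)).image _
  · exact fun a ha => mem_graphOn.2 ⟨Or.inl ha, hfix C hC a ha⟩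
  · intro β hβ
    exact Set.image_mono (Set.union_subset_union_right _
      (Set.image_mono (Set.Iic_subset_Iic.2 hβ.le)))
  · have hmove : pull C (m α) ∈ C ∪ (pull C ∘ m) '' Set.Iic α :=
      Or.inr ⟨α, Set.mem_Iic.2 le_rfl, rfl⟩
    rcases hmα : m α with a | b <;> rw [hmα] at hmove
    · exact ⟨e C a, mem_graphOn.2 ⟨hmove, rfl⟩⟩
    · exact ⟨(e C).symm b, mem_graphOn.2 ⟨hmove, (e C).apply_symm_apply b⟩⟩

lemma existsWinsPrec_holds : existsWinsPrec := by
  have hiso : ∀ C : Set ModA,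
      ∃ e : ModA ≃ ModB, IsIso e ∧ (C.Countable → ∀ a ∈ C, e a = incl a) := by
    intro C
    by_cases hC : C.Countable
    · obtain ⟨e, he, hfix⟩ := exists_isIso_fixing hC
      exact ⟨e, he, fun _ => hfix⟩
    · obtain ⟨e, he, -⟩ := exists_isIso_fixing Set.countable_empty
      exact ⟨e, he, fun h => absurd h hC⟩
  choose e he hfix using hiso
  exact existsWinsPrec_of_isIso e he hfix

lemma IsPIso.fixed_notMem_of_mapsTo_none {p : Set (ModA × ModB)} (hp : IsPIso p) {a : ModA}
    {z : O1} (ha : (a, (none, z)) ∈ p) (y : O1) : ((a.1, y), incl (a.1, y)) ∉ p := fun hy => by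
  simpa [EqA, EqB, incl] using hp.2.2 _ _ _ _ ha hy

lemma exists_fresh_in_class {p : Set (ModA × ModB)} (hp : p.Countable) (x : O1) :
    ∃ y, (x, y) ∉ pdom p ∧ incl (x, y) ∉ pran p := by
  have hdom : (pdom p).Countable :=
    (hp.image Prod.fst).mono <| by rintro a ⟨b, h⟩; exact ⟨(a, b), h, rfl⟩
  have hran : (pran p).Countable :=
    (hp.image Prod.snd).mono <| by rintro b ⟨a, h⟩; exact ⟨(a, b), h, rfl⟩
  obtain ⟨y, hy⟩ := ((hdom.image Prod.snd).union (hran.image Prod.snd)).infinite_compl.nonempty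
  simp only [Set.mem_compl_iff, Set.mem_union, not_or] at hy
  exact ⟨y, fun h => hy.1 ⟨_, h, rfl⟩, fun h => hy.2 ⟨_, h, rfl⟩⟩

def freshIn (p : Set (ModA × ModB)) (x : O1) : ModA :=
  (x, Classical.epsilon fun y => (x, y) ∉ pdom p ∧ incl (x, y) ∉ pran p)

lemma freshIn_fresh {p : Set (ModA × ModB)} (hp : p.Countable) (x : O1) :
    freshIn p x ∉ pdom p ∧ incl (freshIn p x) ∉ pran p :=
  Classical.epsilon_spec (exists_fresh_in_class hp x)

def newPoint : ModB := (none, ⟨0, zero_lt_one.trans one_lt_om1⟩)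

def forallStrategy (p : Ordinal.{0} → Set (ModA × ModB)) (α : Ordinal.{0}) :
    ModA ⊕ (ModA ⊕ ModB) :=
  if α = 0 then .inr (.inr newPoint)
  else .inl (freshIn (p 0) (Classical.epsilon fun a : ModA => (a, newPoint) ∈ p 0).1)

lemma priorPos_one (p : Ordinal.{0} → Set (ModA × ModB)) : priorPos p 1 = p 0 := by
  ext q
  simp [priorPos, Order.lt_one_iff]

lemma forallWinsLe_holds : forallWinsLe := by
  refine ⟨forallStrategy, fun p p' α hp => ?_, fun p => ?_⟩
  · unfold forallStrategy
    split_ifs with hα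
    · rfl
    · rw [hp 0 (pos_iff_ne_zero.2 hα)]
  have hmove0 : forallStrategy p 0 = .inr (.inr newPoint) := if_pos rfl
  by_cases hgood : (p 0).Countable ∧ newPoint ∈ pran (p 0)
  · obtain ⟨hcount, hnew⟩ := hgood
    set a := Classical.epsilon fun a : ModA => (a, newPoint) ∈ p 0
    have ha : (a, newPoint) ∈ p 0 := Classical.epsilon_spec hnew
    have hmove : forallStrategy p 1 = .inl (freshIn (p 0) a.1) := if_neg one_ne_zero
    refine ⟨1, one_lt_om1, fun β hβ => ?_, ?_⟩
    · rcases Order.le_one_iff.1 hβ with rfl | rfl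
      · rw [hmove0]
        trivial
      · rw [hmove, priorPos_one]
        exact freshIn_fresh hcount a.1
    · rintro ⟨hiso1, -, hmono, hdemand⟩
      rw [hmove] at hdemand
      exact hiso1.fixed_notMem_of_mapsTo_none (hmono 0 zero_lt_one ha) _ hdemand
  · refine ⟨0, zero_lt_one.trans one_lt_om1, fun β hβ => ?_, fun h => hgood ⟨h.2.1, ?_⟩⟩
    · rw [nonpos_iff_eq_zero.1 hβ, hmove0]
      trivial
    · have hdemand := h.2.2.2
      rwa [hmove0] at hdemand

/-- There are structures `A ⊆ B` in the vocabulary of one equivalence relation — `A`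
consisting of ω₁ classes of size ω₁ and `B` having one further class of size ω₁ — such
that ∃ wins the game `G_⪯(A,B)` but ∀ wins the game `G_≤(A,B)`. -/
theorem prec_not_le : existsWinsPrec ∧ forallWinsLe :=
  ⟨existsWinsPrec_holds, forallWinsLe_holds⟩

end
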